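/- arXiv:1703.03369 — 5 statements merged into one kernel-verified Lean document; each statement's English description precedes it below -/
import Mathlib

section
/- The Huber function ψ_γ is Fréchet differentiable on ℝⁿ, with gradient ∇ψ_γ(z) = g γ z / max(g, γ|z|) for all z ∈ ℝⁿ. -/
/-!
Write `ψ z = h (‖z‖ ^ 2)`, where `h s = γ s / 2` for `s ≤ (g / γ) ^ 2` and
`h s = g √s - g ^ 2 / (2 γ)` otherwise. Away from the kink `s = (g / γ) ^ 2` both branches are
smooth, and their derivatives combine into `g γ / (2 max g (γ √s))`, which is continuous across the
kink; since `h` is continuous, it is differentiable everywhere. The chain rule with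
`∇ ‖z‖ ^ 2 = 2 z` then gives the gradient. Passing through `‖z‖ ^ 2` rather than `‖z‖` avoids the
non-differentiability of the norm at the origin.
-/

open Real

noncomputable def huberOfSq (g γ s : ℝ) : ℝ :=
  if s ≤ (g / γ) ^ 2 then γ / 2 * s else g * √s - g ^ 2 / (2 * γ)

theorem HasDerivAt.hasGradientAt_comp_norm_sq {F : Type*} [NormedAddCommGroup F]
    [InnerProductSpace ℝ F] [CompleteSpace F] {h : ℝ → ℝ} {h' : ℝ} {x : F}
    (hh : HasDerivAt h h' (‖x‖ ^ 2)) :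
    HasGradientAt (fun y => h (‖y‖ ^ 2)) ((2 * h') • x) x := by
  have hdual : InnerProductSpace.toDual ℝ F ((2 * h') • x) = h' • 2 • innerSL ℝ x := by
    ext y
    simp
    ring
  rw [hasGradientAt_iff_hasFDerivAt, hdual]
  exact hh.comp_hasFDerivAt x (hasStrictFDerivAt_norm_sq x).hasFDerivAt

section
variable {g γ : ℝ}

theorem huberOfSq_sq (hg : 0 < g) (hγ : 0 < γ) {t : ℝ} (ht : 0 ≤ t) :
    huberOfSq g γ (t ^ 2) = if t > g / γ then g * t - g ^ 2 / (2 * γ) else γ / 2 * t ^ 2 := by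
  have ha : 0 ≤ g / γ := by positivity
  simp only [huberOfSq, sqrt_sq ht, gt_iff_lt, ← not_le, sq_le_sq₀ ht ha]
  split_ifs <;> rfl

theorem continuous_huberOfSq (hg : 0 < g) (hγ : 0 < γ) : Continuous (huberOfSq g γ) := by
  refine Continuous.if_le (by fun_prop) (by fun_prop) continuous_id continuous_const ?_
  intro s hs
  rw [hs, sqrt_sq (by positivity)]
  field_simp
  ring

theorem hasDerivAt_huberOfSq_of_lt {s : ℝ} (hs : s < (g / γ) ^ 2) :
    HasDerivAt (huberOfSq g γ) (γ / 2) s := by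
  have hloc : huberOfSq g γ =ᶠ[nhds s] fun s => γ / 2 * s := by
    filter_upwards [eventually_lt_nhds hs] with t ht
    simp [huberOfSq, ht.le]
  simpa using ((hasDerivAt_id s).const_mul (γ / 2)).congr_of_eventuallyEq hloc

theorem hasDerivAt_huberOfSq_of_gt {s : ℝ} (hs : (g / γ) ^ 2 < s) :
    HasDerivAt (huberOfSq g γ) (g / (2 * √s)) s := by
  have hloc : huberOfSq g γ =ᶠ[nhds s] fun s => g * √s - g ^ 2 / (2 * γ) := by
    filter_upwards [eventually_gt_nhds hs] with t ht
    simp [huberOfSq, ht.not_ge]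
  have hs0 : s ≠ 0 := (lt_of_le_of_lt (sq_nonneg _) hs).ne'
  rw [← mul_one_div]
  exact (((hasDerivAt_sqrt hs0).const_mul g).sub_const _).congr_of_eventuallyEq hloc

theorem hasDerivAt_huberOfSq (hg : 0 < g) (hγ : 0 < γ) (s : ℝ) :
    HasDerivAt (huberOfSq g γ) (g * γ / (2 * max g (γ * √s))) s := by
  refine hasDerivAt_of_hasDerivAt_of_ne' (x := (g / γ) ^ 2) (fun t ht => ?_)
    (continuous_huberOfSq hg hγ).continuousAt (g := fun s => g * γ / (2 * max g (γ * √s)))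
    (continuous_const.div (by fun_prop) fun t => by positivity).continuousAt s
  rcases ht.lt_or_gt with ht | ht
  · have hle : γ * √t ≤ g := by
      rw [← le_div_iff₀' hγ]
      exact (sqrt_lt' (by positivity)).2 ht |>.le
    rw [max_eq_left hle, show g * γ / (2 * g) = γ / 2 by field_simp]
    exact hasDerivAt_huberOfSq_of_lt ht
  · have hlt : g < γ * √t := by
      rw [← div_lt_iff₀' hγ]
      exact (lt_sqrt (by positivity)).2 ht
    rw [max_eq_right hlt.le, show g * γ / (2 * (γ * √t)) = g / (2 * √t) by field_simp]
    exact hasDerivAt_huberOfSq_of_gt ht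
end

theorem huber_gradient (n : ℕ) (g γ : ℝ) (hg : 0 < g) (hγ : 0 < γ)
    (ψ : EuclideanSpace ℝ (Fin n) → ℝ)
    (hψ : ∀ z, ψ z = if ‖z‖ > g / γ then g * ‖z‖ - g ^ 2 / (2 * γ) else γ / 2 * ‖z‖ ^ 2) :
    ∀ z : EuclideanSpace ℝ (Fin n),
      HasGradientAt ψ ((g * γ / max g (γ * ‖z‖)) • z) z := by
  intro z
  have hψ' : ψ = fun y => huberOfSq g γ (‖y‖ ^ 2) :=
    funext fun y => (hψ y).trans (huberOfSq_sq hg hγ (norm_nonneg y)).symm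
  rw [hψ']
  convert (hasDerivAt_huberOfSq hg hγ (‖z‖ ^ 2)).hasGradientAt_comp_norm_sq using 2
  rw [sqrt_sq (norm_nonneg z)]
  have hmax : 0 < max g (γ * ‖z‖) := lt_max_of_lt_left hg
  field_simp
end

section
/- The map q : ℝⁿ → ℝⁿ defined by q(z) = g γ z / max(g, γ|z|) is Lipschitz continuous on ℝⁿ with Lipschitz constant γ. -/
/-!
Writing `r = g / γ`, the map is `q = γ • P` where `P z = (r / max r ‖z‖) • z` is the radial
retraction onto the closed ball of radius `r`. This retraction is the metric projection onto the
ball, so it satisfies the variational inequality `⟪z - P z, y - P z⟫ ≤ 0` for `‖y‖ ≤ r`. Adding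
this inequality at `(z, P w)` and at `(w, P z)` gives `‖P z - P w‖² ≤ ⟪z - w, P z - P w⟫`, hence
`P` is `1`-Lipschitz by Cauchy–Schwarz, and `q` is `γ`-Lipschitz.
-/

open RealInnerProductSpace

section

variable {E : Type*} [NormedAddCommGroup E] [InnerProductSpace ℝ E]

theorem lipschitzWith_one_of_inner_sub_le_zero {P : E → E}
    (hP : ∀ z w, ⟪z - P z, P w - P z⟫ ≤ 0) : LipschitzWith 1 P := by
  refine LipschitzWith.of_dist_le_mul fun z w => ?_
  rw [NNReal.coe_one, one_mul, dist_eq_norm, dist_eq_norm]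
  have hsq : ‖P z - P w‖ ^ 2 ≤ ⟪z - w, P z - P w⟫ := by
    have hsum := add_nonpos (hP z w) (hP w z)
    rw [← real_inner_self_eq_norm_sq]
    have hPw : P z - P w = -(P w - P z) := (neg_sub _ _).symm
    simp only [hPw, inner_neg_right, inner_neg_left, inner_sub_left] at hsum ⊢
    linarith
  have hcs : ⟪z - w, P z - P w⟫ ≤ ‖z - w‖ * ‖P z - P w‖ := real_inner_le_norm _ _
  nlinarith [norm_nonneg (P z - P w), norm_nonneg (z - w)]

noncomputable def ballRetraction (r : ℝ) (z : E) : E := (r / max r ‖z‖) • z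

variable {r : ℝ}

theorem norm_ballRetraction_le (hr : 0 ≤ r) (z : E) : ‖ballRetraction r z‖ ≤ r := by
  have hc : 0 ≤ r / max r ‖z‖ := div_nonneg hr (hr.trans (le_max_left _ _))
  rw [ballRetraction, norm_smul, Real.norm_of_nonneg hc]
  calc r / max r ‖z‖ * ‖z‖ ≤ r / max r ‖z‖ * max r ‖z‖ :=
        mul_le_mul_of_nonneg_left (le_max_right _ _) hc
    _ = r := div_mul_cancel_of_imp fun h => le_antisymm (h ▸ le_max_left _ _) hr

theorem inner_sub_ballRetraction_le_zero (hr : 0 ≤ r) (z : E) {y : E} (hy : ‖y‖ ≤ r) :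
    ⟪z - ballRetraction r z, y - ballRetraction r z⟫ ≤ 0 := by
  rcases lt_or_ge ‖z‖ r with hzr | hrz
  · have hfix : ballRetraction r z = z := by
      rw [ballRetraction, max_eq_left hzr.le, div_self (norm_nonneg z |>.trans_lt hzr).ne',
        one_smul]
    rw [hfix, sub_self, inner_zero_left]
  · set c := r / ‖z‖
    have hc1 : c ≤ 1 := div_le_one_of_le₀ hrz (norm_nonneg z)
    have hcz : c * ‖z‖ = r := div_mul_cancel_of_imp fun h => le_antisymm (h ▸ hrz) hr
    have hP : ballRetraction r z = c • z := by rw [ballRetraction, max_eq_right hrz]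
    have hzy : ⟪z, y⟫ ≤ c * ‖z‖ ^ 2 :=
      calc ⟪z, y⟫ ≤ ‖z‖ * ‖y‖ := real_inner_le_norm _ _
        _ ≤ ‖z‖ * r := mul_le_mul_of_nonneg_left hy (norm_nonneg z)
        _ = c * ‖z‖ ^ 2 := by rw [← hcz]; ring
    have hexpand : ⟪z - c • z, y - c • z⟫ = (1 - c) * (⟪z, y⟫ - c * ‖z‖ ^ 2) := by
      simp only [inner_sub_left, inner_sub_right, real_inner_smul_left, real_inner_smul_right,
        real_inner_self_eq_norm_sq, norm_smul, mul_pow, Real.norm_eq_abs, sq_abs]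
      ring
    rw [hP, hexpand]
    exact mul_nonpos_of_nonneg_of_nonpos (sub_nonneg.mpr hc1) (sub_nonpos.mpr hzy)

theorem lipschitzWith_one_ballRetraction (hr : 0 ≤ r) :
    LipschitzWith 1 (ballRetraction (E := E) r) :=
  lipschitzWith_one_of_inner_sub_le_zero fun z w =>
    inner_sub_ballRetraction_le_zero hr z (norm_ballRetraction_le hr w)

end

theorem huber_gradient_lipschitz (n : ℕ) (g γ : ℝ) (hg : 0 < g) (hγ : 0 < γ)
    (q : EuclideanSpace ℝ (Fin n) → EuclideanSpace ℝ (Fin n))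
    (hq : ∀ z, q z = (g * γ / max g (γ * ‖z‖)) • z) :
    ∀ z w : EuclideanSpace ℝ (Fin n), ‖q z - q w‖ ≤ γ * ‖z - w‖ := by
  have hq' : ∀ z, q z = γ • ballRetraction (g / γ) z := by
    intro z
    have hmax : max g (γ * ‖z‖) = γ * max (g / γ) ‖z‖ := by
      rw [mul_max_of_nonneg _ _ hγ.le, mul_div_cancel₀ _ hγ.ne']
    rw [hq, hmax, ballRetraction, smul_smul]
    congr 1
    field_simp
  intro z w
  have hP := (lipschitzWith_one_ballRetraction (E := EuclideanSpace ℝ (Fin n))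
    (div_nonneg hg.le hγ.le)).dist_le_mul z w
  rw [NNReal.coe_one, one_mul, dist_eq_norm, dist_eq_norm] at hP
  rw [hq', hq', ← smul_sub, norm_smul, Real.norm_of_nonneg hγ.le]
  exact mul_le_mul_of_nonneg_left hP hγ.le
end

section
/- If J : D → ℝᵐ, defined on an open set D ⊆ ℝⁿ, is locally Lipschitz continuous and directionally differentiable at x₀ ∈ D, then J is B-differentiable at x₀, i.e. ‖J(x₀+h) - J(x₀) - J'(x₀)(h)‖ = o(‖h‖) as h → 0, where J'(x₀)(h) denotes the one-sided directional derivative. -/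
/-!
For small `t > 0` the difference quotients `h ↦ t⁻¹ • (J (x₀ + t • h) - J x₀)` are all
`K`-Lipschitz on the closed unit ball, so their pointwise convergence to `J'` is uniform on that
compact ball. The directional derivative is positively homogeneous, so writing `h = ‖h‖ • u` with
`‖u‖ = 1` and taking `t = ‖h‖` turns this uniform convergence into the `o(‖h‖)` estimate.
-/

open Filter Topology Asymptotics NNReal

section Uniform

variable {ι X Y : Type*} [PseudoMetricSpace X] [PseudoMetricSpace Y]
  {F : ι → X → Y} {f : X → Y} {l : Filter ι} {S : Set X} {K : ℝ≥0}

theorem LipschitzOnWith.of_tendsto [l.NeBot] (hF : ∀ᶠ i in l, LipschitzOnWith K (F i) S)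
    (hf : ∀ x ∈ S, Tendsto (F · x) l (𝓝 (f x))) : LipschitzOnWith K f S := by
  simp only [lipschitzOnWith_iff_restrict] at hF ⊢
  refine (isClosed_setOfPred_lipschitzWith K).mem_of_tendsto ?_ hF
  exact tendsto_pi_nhds.2 fun x => hf x x.2

theorem tendstoUniformlyOn_of_eventually_lipschitzOnWith [l.NeBot] (hS : IsCompact S)
    (hF : ∀ᶠ i in l, LipschitzOnWith K (F i) S)
    (hf : ∀ x ∈ S, Tendsto (F · x) l (𝓝 (f x))) : TendstoUniformlyOn F f l S := by
  rw [Metric.tendstoUniformlyOn_iff]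
  intro ε hε
  set ρ := ε / (3 * (K + 1))
  have hρ : 0 < ρ := by positivity
  have hKρ : K * ρ < ε / 3 := by
    rw [show ε / 3 = (K + 1) * ρ by simp only [ρ]; field_simp]
    exact mul_lt_mul_of_pos_right (lt_add_one _) hρ
  have hf_lip := LipschitzOnWith.of_tendsto hF hf
  obtain ⟨T, hTS, hT, hST⟩ := hS.finite_cover_balls hρ
  have hnet : ∀ᶠ i in l, ∀ x ∈ T, dist (f x) (F i x) < ε / 3 :=
    hT.eventually_all.2 fun x hx =>
      (hf x (hTS hx)).eventually (Metric.ball_mem_nhds _ (by positivity : (0 : ℝ) < ε / 3))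
        |>.mono fun i hi => by simpa [dist_comm] using hi
  filter_upwards [hF, hnet] with i hFi hi y hy
  obtain ⟨x, hxT, hyx⟩ := Set.mem_iUnion₂.1 (hST hy)
  have hyx' : K * dist y x ≤ K * ρ := by gcongr; exact (Metric.mem_ball.1 hyx).le
  calc dist (f y) (F i y) ≤ dist (f y) (f x) + dist (f x) (F i x) + dist (F i x) (F i y) :=
        dist_triangle4 _ _ _ _
    _ < ε / 3 + ε / 3 + ε / 3 := by
        have h1 := hf_lip.dist_le_mul y hy x (hTS hxT)
        have h2 := hFi.dist_le_mul x (hTS hxT) y hy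
        rw [dist_comm x y] at h2
        linarith [hi x hxT]
    _ = ε := by ring

end Uniform

section DirectionalDerivative

variable {E G : Type*}

theorem dirDeriv_smul_of_nonneg [AddCommGroup E] [Module ℝ E] [NormedAddCommGroup G]
    [NormedSpace ℝ G] {J J' : E → G} {x₀ : E}
    (hdir : ∀ h, Tendsto (fun t : ℝ => t⁻¹ • (J (x₀ + t • h) - J x₀)) (𝓝[>] 0) (𝓝 (J' h)))
    (c : ℝ) (hc : 0 ≤ c) (u : E) : J' (c • u) = c • J' u := by
  rcases hc.eq_or_lt with rfl | hc
  · rw [zero_smul, zero_smul]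
    refine tendsto_nhds_unique (hdir 0) ?_
    simp
  have hscale : Tendsto (· * c) (𝓝[>] (0 : ℝ)) (𝓝[>] 0) :=
    tendsto_nhdsWithin_of_tendsto_nhds_of_eventually_within _
      (((continuous_mul_const c).tendsto' 0 0 (zero_mul c)).mono_left nhdsWithin_le_nhds)
      (eventually_nhdsWithin_of_forall fun t ht => mul_pos ht hc)
  refine tendsto_nhds_unique (hdir (c • u)) (((hdir u).comp hscale).const_smul c |>.congr' ?_)
  filter_upwards [self_mem_nhdsWithin] with t (ht : 0 < t)
  simp only [Function.comp_apply, smul_smul, mul_inv_rev]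
  field_simp [ht.ne', hc.ne']

theorem LipschitzOnWith.differenceQuotient [SeminormedAddCommGroup E] [NormedSpace ℝ E]
    [SeminormedAddCommGroup G] [NormedSpace ℝ G] {J : E → G} {K : ℝ≥0} {s : Set E}
    (hJ : LipschitzOnWith K J s) (x₀ : E) {t : ℝ} (ht : 0 < t) :
    LipschitzOnWith K (fun h => t⁻¹ • (J (x₀ + t • h) - J x₀)) ((x₀ + t • ·) ⁻¹' s) := by
  refine LipschitzOnWith.of_dist_le_mul fun a ha b hb => ?_
  have := hJ.dist_le_mul _ ha _ hb
  rw [dist_add_left, dist_smul₀, Real.norm_of_nonneg ht.le] at this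
  rw [dist_smul₀, dist_sub_right, Real.norm_of_nonneg (inv_nonneg.2 ht.le)]
  calc t⁻¹ * dist (J (x₀ + t • a)) (J (x₀ + t • b)) ≤ t⁻¹ * (K * (t * dist a b)) := by gcongr
    _ = K * dist a b := by field_simp

theorem isLittleO_of_tendstoUniformlyOn_closedBall [NormedAddCommGroup E] [NormedSpace ℝ E]
    [NormedAddCommGroup G] [NormedSpace ℝ G] {J J' : E → G} {x₀ : E}
    (hhom : ∀ c : ℝ, 0 ≤ c → ∀ u, J' (c • u) = c • J' u)
    (hunif : TendstoUniformlyOn (fun (t : ℝ) h => t⁻¹ • (J (x₀ + t • h) - J x₀)) J'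
      (𝓝[>] (0 : ℝ)) (Metric.closedBall 0 1)) :
    (fun h => J (x₀ + h) - J x₀ - J' h) =o[𝓝 0] fun h => ‖h‖ := by
  rw [isLittleO_iff]
  intro ε hε
  have hnear := (tendsto_norm_nhdsNE_zero (E := E)).eventually
    (Metric.tendstoUniformlyOn_iff.1 hunif ε hε)
  filter_upwards [eventually_nhdsWithin_iff.1 hnear] with h hh
  rcases eq_or_ne h 0 with rfl | h0
  · have hJ'0 : J' 0 = 0 := by simpa using hhom 0 le_rfl 0
    simp [hJ'0]
  set t := ‖h‖
  have ht : 0 < t := norm_pos_iff.2 h0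
  set u := t⁻¹ • h
  have hu : u ∈ Metric.closedBall 0 1 := by
    simp [u, t, norm_smul, ht.ne']
  have htu : t • u = h := by simp [u, smul_smul, ht.ne']
  have hdecomp : J (x₀ + h) - J x₀ - J' h = t • (t⁻¹ • (J (x₀ + t • u) - J x₀) - J' u) := by
    rw [smul_sub, ← hhom t ht.le, htu, smul_inv_smul₀ ht.ne']
  have hclose := hh h0 u hu
  rw [hdecomp, norm_smul, ← dist_eq_norm, dist_comm, Real.norm_of_nonneg ht.le, mul_comm ε]
  exact mul_le_mul_of_nonneg_left hclose.le ht.le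

end DirectionalDerivative

theorem locally_lipschitz_dir_diff_implies_B_differentiable_general
    (n m : ℕ)
    (J : EuclideanSpace ℝ (Fin n) → EuclideanSpace ℝ (Fin m))
    (x₀ : EuclideanSpace ℝ (Fin n))
    (hlip : ∃ K : ℝ≥0, ∃ s ∈ 𝓝 x₀, LipschitzOnWith K J s)
    (J' : EuclideanSpace ℝ (Fin n) → EuclideanSpace ℝ (Fin m))
    (hdir : ∀ h, Tendsto (fun t : ℝ => t⁻¹ • (J (x₀ + t • h) - J x₀))
      (𝓝[>] (0 : ℝ)) (𝓝 (J' h))) :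
    (fun h => J (x₀ + h) - J x₀ - J' h) =o[𝓝 (0 : EuclideanSpace ℝ (Fin n))]
      fun h => ‖h‖ := by
  obtain ⟨K, s, hs, hK⟩ := hlip
  obtain ⟨r, hr, hball⟩ := Metric.mem_nhds_iff.1 hs
  refine isLittleO_of_tendstoUniformlyOn_closedBall (dirDeriv_smul_of_nonneg hdir) ?_
  refine tendstoUniformlyOn_of_eventually_lipschitzOnWith (K := K) (isCompact_closedBall 0 1) ?_
    fun u _ => hdir u
  filter_upwards [Ioo_mem_nhdsGT hr] with t ⟨ht0, htr⟩
  refine (LipschitzOnWith.differenceQuotient hK x₀ ht0).mono fun u hu => hball ?_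
  rw [Metric.mem_closedBall, dist_zero_right] at hu
  rw [Metric.mem_ball, dist_self_add_left, norm_smul, Real.norm_of_nonneg ht0.le]
  exact (mul_le_of_le_one_right ht0.le hu).trans_lt htr

theorem locally_lipschitz_dir_diff_implies_B_differentiable
    (n m : ℕ) (D : Set (EuclideanSpace ℝ (Fin n))) (hD : IsOpen D)
    (J : EuclideanSpace ℝ (Fin n) → EuclideanSpace ℝ (Fin m))
    (x₀ : EuclideanSpace ℝ (Fin n)) (hx₀ : x₀ ∈ D)
    (hlip : ∃ K : ℝ≥0, ∃ s ∈ 𝓝 x₀, LipschitzOnWith K J s)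
    (J' : EuclideanSpace ℝ (Fin n) → EuclideanSpace ℝ (Fin m))
    (hdir : ∀ h, Tendsto (fun t : ℝ => t⁻¹ • (J (x₀ + t • h) - J x₀))
      (𝓝[>] (0 : ℝ)) (𝓝 (J' h))) :
    (fun h => J (x₀ + h) - J x₀ - J' h) =o[𝓝 (0 : EuclideanSpace ℝ (Fin n))]
      fun h => ‖h‖ :=
  locally_lipschitz_dir_diff_implies_B_differentiable_general n m J x₀ hlip J' hdir
end

section
/- (Mean value theorem for B-differentiable functions.) Let D ⊆ ℝⁿ be open and convex and J : D → ℝᵐ be B-differentiable on D with locally Lipschitz J. Then for any x₀, x₁ ∈ D the function t ↦ J'(x₀ + t(x₁-x₀))(x₁-x₀) is Lebesgue integrable on [0,1] and J(x₁) = J(x₀) + ∫₀¹ J'(x₀ + t(x₁-x₀))(x₁-x₀) dt. -/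
open Filter Topology Asymptotics NNReal

/-!
Along the segment `γ t = x₀ + t • (x₁ - x₀)`, the function `g = J ∘ γ` is Lipschitz on `[0, 1]`
(a locally Lipschitz function is Lipschitz on the compact segment), and the one-sided directional
derivative of `J` is exactly the right derivative of `g`. A right derivative is a Borel function of
the base point, and it is bounded by the Lipschitz constant of `g`, hence integrable; the
fundamental theorem of calculus for right derivatives of continuous functions then gives
`g 1 - g 0 = ∫₀¹ g'`.
-/

open MeasureTheory Set

section RightDerivative

variable {F : Type*} [NormedAddCommGroup F] [NormedSpace ℝ F]

theorem hasDerivWithinAt_Ioi_iff_tendsto_slope_zero_right {f : ℝ → F} {f' : F} {x : ℝ} :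
    HasDerivWithinAt f f' (Ioi x) x ↔
      Tendsto (fun t ↦ t⁻¹ • (f (x + t) - f x)) (𝓝[>] 0) (𝓝 f') := by
  have : 𝓝[>] x = map (x + ·) (𝓝[>] 0) := by simp
  rw [hasDerivWithinAt_iff_tendsto_slope' self_notMem_Ioi, this, tendsto_map'_iff]
  simp [slope, Function.comp_def]

theorem HasDerivWithinAt.norm_le_of_lipschitzOnWith {f : ℝ → F} {f' : F} {x : ℝ} {s : Set ℝ}
    {K : ℝ≥0} (hf : HasDerivWithinAt f f' (Ioi x) x) (hs : s ∈ 𝓝 x)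
    (hlip : LipschitzOnWith K f s) : ‖f'‖ ≤ K := by
  rw [hasDerivWithinAt_iff_tendsto_slope' self_notMem_Ioi] at hf
  refine le_of_tendsto hf.norm ?_
  filter_upwards [nhdsWithin_le_nhds hs, self_mem_nhdsWithin] with y hy hxy
  rw [slope_def_module, norm_smul, norm_inv, ← dist_eq_norm, ← dist_eq_norm,
    inv_mul_le_iff₀ (dist_pos.2 (ne_of_gt hxy))]
  exact (hlip.dist_le_mul y hy x (mem_of_mem_nhds hs)).trans_eq (mul_comm _ _)

theorem aestronglyMeasurable_of_hasDerivWithinAt_Ioi [CompleteSpace F] {f φ : ℝ → F} {s : Set ℝ}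
    (hs : MeasurableSet s) (hf : ∀ x ∈ s, HasDerivWithinAt f (φ x) (Ioi x) x) (μ : Measure ℝ) :
    AEStronglyMeasurable φ (μ.restrict s) :=
  (aestronglyMeasurable_derivWithin_Ioi f _).congr <| ae_restrict_of_forall_mem hs
    fun x hx ↦ (hf x hx).derivWithin (uniqueDiffWithinAt_Ioi x)

theorem LipschitzOnWith.integral_eq_sub_of_hasDerivWithinAt_Ioi [CompleteSpace F] {f φ : ℝ → F}
    {a b : ℝ} {K : ℝ≥0} (hab : a ≤ b)
    (hf : LipschitzOnWith K f (Icc a b)) (hφ : ∀ x ∈ Ioo a b, HasDerivWithinAt f (φ x) (Ioi x) x) :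
    IntervalIntegrable φ volume a b ∧ ∫ x in a..b, φ x = f b - f a := by
  have hbound : ∀ x ∈ Ioo a b, ‖φ x‖ ≤ K := fun x hx ↦
    (hφ x hx).norm_le_of_lipschitzOnWith (Icc_mem_nhds hx.1 hx.2) hf
  have hint : IntervalIntegrable φ volume a b := by
    rw [intervalIntegrable_iff_integrableOn_Ioo_of_le hab]
    exact .of_bound measure_Ioo_lt_top
      (aestronglyMeasurable_of_hasDerivWithinAt_Ioi measurableSet_Ioo hφ volume) K
      (ae_restrict_of_forall_mem measurableSet_Ioo hbound)
  exact ⟨hint, intervalIntegral.integral_eq_sub_of_hasDeriv_right_of_le hab hf.continuousOn hφ hint⟩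

theorem hasDerivWithinAt_Ioi_comp_add_smul_of_tendsto {E : Type*} [NormedAddCommGroup E]
    [NormedSpace ℝ E] {f : E → F} {f' : F} {x v : E} {t : ℝ}
    (h : Tendsto (fun u : ℝ ↦ u⁻¹ • (f (x + t • v + u • v) - f (x + t • v))) (𝓝[>] 0) (𝓝 f')) :
    HasDerivWithinAt (fun s : ℝ ↦ f (x + s • v)) f' (Ioi t) t := by
  rw [hasDerivWithinAt_Ioi_iff_tendsto_slope_zero_right]
  simpa only [add_smul, add_assoc] using h

end RightDerivative

theorem Convex.exists_lipschitzOnWith_comp_segment {E F : Type*} [NormedAddCommGroup E]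
    [NormedSpace ℝ E] [PseudoMetricSpace F] {f : E → F} {s : Set E} (hs : Convex ℝ s)
    (hf : LocallyLipschitzOn s f) {x y : E} (hx : x ∈ s) (hy : y ∈ s) :
    ∃ K, LipschitzOnWith K (fun t : ℝ ↦ f (x + t • (y - x))) (Icc 0 1) := by
  have hseg : IsCompact (segment ℝ x y) := by
    rw [segment_eq_image_lineMap]
    exact isCompact_Icc.image AffineMap.lineMap_continuous
  obtain ⟨K, hK⟩ := (hf.mono (hs.segment_subset hx hy)).exists_lipschitzOnWith_of_compact hseg
  refine ⟨K * nndist x y, ?_⟩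
  have := hK.comp (lipschitzWith_lineMap x y).lipschitzOnWith
    (segment_eq_image_lineMap ℝ x y ▸ mapsTo_image _ _)
  convert this using 2 with t
  simp [AffineMap.lineMap_apply_module', add_comm]

theorem mean_value_B_differentiable_general
    (n m : ℕ) (D : Set (EuclideanSpace ℝ (Fin n)))
    (hDconv : Convex ℝ D)
    (J : EuclideanSpace ℝ (Fin n) → EuclideanSpace ℝ (Fin m))
    (J' : EuclideanSpace ℝ (Fin n) → EuclideanSpace ℝ (Fin n) →
      EuclideanSpace ℝ (Fin m))
    (hlip : ∀ x ∈ D, ∃ K : ℝ≥0, ∃ s ∈ 𝓝 x, LipschitzOnWith K J s)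
    (hdir : ∀ x ∈ D, ∀ h, Tendsto (fun t : ℝ => t⁻¹ • (J (x + t • h) - J x))
      (𝓝[>] (0 : ℝ)) (𝓝 (J' x h)))
    (x₀ x₁ : EuclideanSpace ℝ (Fin n)) (hx₀ : x₀ ∈ D) (hx₁ : x₁ ∈ D) :
    IntervalIntegrable (fun t : ℝ => J' (x₀ + t • (x₁ - x₀)) (x₁ - x₀))
      MeasureTheory.volume 0 1 ∧
    J x₁ = J x₀ + ∫ t in (0:ℝ)..1, J' (x₀ + t • (x₁ - x₀)) (x₁ - x₀) := by
  have hJ : LocallyLipschitzOn D J := fun x hx ↦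
    let ⟨K, s, hs, hK⟩ := hlip x hx
    ⟨K, s, mem_nhdsWithin_of_mem_nhds hs, hK⟩
  obtain ⟨K, hK⟩ := hDconv.exists_lipschitzOnWith_comp_segment hJ hx₀ hx₁
  have hderiv : ∀ t ∈ Ioo (0 : ℝ) 1, HasDerivWithinAt (fun s : ℝ ↦ J (x₀ + s • (x₁ - x₀)))
      (J' (x₀ + t • (x₁ - x₀)) (x₁ - x₀)) (Ioi t) t :=
    fun t ht ↦ hasDerivWithinAt_Ioi_comp_add_smul_of_tendsto
      (hdir _ (hDconv.add_smul_sub_mem hx₀ hx₁ (Ioo_subset_Icc_self ht)) _)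
  obtain ⟨hint, hFTC⟩ := hK.integral_eq_sub_of_hasDerivWithinAt_Ioi zero_le_one hderiv
  exact ⟨hint, by simp [hFTC]⟩

theorem mean_value_B_differentiable
    (n m : ℕ) (D : Set (EuclideanSpace ℝ (Fin n))) (hD : IsOpen D)
    (hDconv : Convex ℝ D)
    (J : EuclideanSpace ℝ (Fin n) → EuclideanSpace ℝ (Fin m))
    (J' : EuclideanSpace ℝ (Fin n) → EuclideanSpace ℝ (Fin n) →
      EuclideanSpace ℝ (Fin m))
    (hlip : ∀ x ∈ D, ∃ K : ℝ≥0, ∃ s ∈ 𝓝 x, LipschitzOnWith K J s)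
    (hdir : ∀ x ∈ D, ∀ h, Tendsto (fun t : ℝ => t⁻¹ • (J (x + t • h) - J x))
      (𝓝[>] (0 : ℝ)) (𝓝 (J' x h)))
    (ho : ∀ x ∈ D, (fun h => J (x + h) - J x - J' x h)
      =o[𝓝 (0 : EuclideanSpace ℝ (Fin n))] fun h => ‖h‖)
    (x₀ x₁ : EuclideanSpace ℝ (Fin n)) (hx₀ : x₀ ∈ D) (hx₁ : x₁ ∈ D) :
    IntervalIntegrable (fun t : ℝ => J' (x₀ + t • (x₁ - x₀)) (x₁ - x₀))
      MeasureTheory.volume 0 1 ∧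
    J x₁ = J x₀ + ∫ t in (0:ℝ)..1, J' (x₀ + t • (x₁ - x₀)) (x₁ - x₀) :=
  mean_value_B_differentiable_general n m D hDconv J J' hlip hdir x₀ x₁ hx₀ hx₁
end

section
/- Let H : ℝᴺ → ℝᴺ and suppose for vectors u, ũ with w = ũ - u ≠ 0 that H(ũ) - H(u) = ∫₀¹ H'(u + tw)(w) dt, that there is a constant c > 0 with ⟨H°(ũ)(w), w⟩ ≥ c‖w‖², and that ‖∫₀¹ (H'(u+tw)(w) - H°(ũ)(w)) dt‖ ≤ ε‖w‖ with ε < c/2. Then ⟨H(u) - H(ũ), w⟩ ≤ -(c/2)‖w‖² < 0. -/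
/-! The mean-value identity writes `H ũ - H u` as the averaged directional derivative `I`, and the
error bound says `I` lies within `ε ‖w‖` of `H°(ũ) w`. A perturbation of size `ε ‖w‖` moves
`⟪·, w⟫` by at most `ε ‖w‖²`, so coercivity of `H°(ũ)` along `w` survives with constant
`c - ε > c / 2`, and `⟪H u - H ũ, w⟫ = -⟪I, w⟫`. -/

open RealInnerProductSpace

theorem inner_ge_of_norm_sub_le {E : Type*} [NormedAddCommGroup E] [InnerProductSpace ℝ E]
    {a b w : E} {c ε : ℝ} (hb : c * ‖w‖ ^ 2 ≤ ⟪b, w⟫) (hab : ‖a - b‖ ≤ ε * ‖w‖) :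
    (c - ε) * ‖w‖ ^ 2 ≤ ⟪a, w⟫ := by
  have hdev : |⟪a - b, w⟫| ≤ ε * ‖w‖ ^ 2 :=
    calc |⟪a - b, w⟫| ≤ ‖a - b‖ * ‖w‖ := abs_real_inner_le_norm _ _
      _ ≤ ε * ‖w‖ * ‖w‖ := by gcongr
      _ = ε * ‖w‖ ^ 2 := by ring
  rw [inner_sub_left] at hdev
  linarith [neg_abs_le (⟪a, w⟫ - ⟪b, w⟫)]

theorem intervalIntegral.integral_zero_one_sub_const {E : Type*} [NormedAddCommGroup E]
    [NormedSpace ℝ E] [CompleteSpace E] {f : ℝ → E}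
    (hf : IntervalIntegrable f MeasureTheory.volume 0 1) (v : E) :
    ∫ t in (0:ℝ)..1, (f t - v) = (∫ t in (0:ℝ)..1, f t) - v := by
  simp [intervalIntegral.integral_sub hf intervalIntegrable_const]

theorem descent_core_inequality_general (N : ℕ)
    (H : EuclideanSpace ℝ (Fin N) → EuclideanSpace ℝ (Fin N))
    (H' : EuclideanSpace ℝ (Fin N) → EuclideanSpace ℝ (Fin N) →
      EuclideanSpace ℝ (Fin N))
    (S : EuclideanSpace ℝ (Fin N) →L[ℝ] EuclideanSpace ℝ (Fin N))
    (u utilde w : EuclideanSpace ℝ (Fin N))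
    (hw0 : w ≠ 0)
    (hint : IntervalIntegrable (fun t : ℝ => H' (u + t • w) w)
      MeasureTheory.volume 0 1)
    (hmvt : H utilde - H u = ∫ t in (0:ℝ)..1, H' (u + t • w) w)
    (c : ℝ) (hc : 0 < c)
    (hpd : c * ‖w‖ ^ 2 ≤ ⟪S w, w⟫)
    (ε : ℝ) (hε : ε < c / 2)
    (herr : ‖∫ t in (0:ℝ)..1, (H' (u + t • w) w - S w)‖ ≤ ε * ‖w‖) :
    ⟪H u - H utilde, w⟫ ≤ -(c / 2) * ‖w‖ ^ 2 ∧ -(c / 2) * ‖w‖ ^ 2 < 0 := by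
  rw [intervalIntegral.integral_zero_one_sub_const hint, ← hmvt] at herr
  have hcoercive := inner_ge_of_norm_sub_le hpd herr
  have hw2 : 0 < ‖w‖ ^ 2 := by positivity
  have hslack : 0 ≤ (c / 2 - ε) * ‖w‖ ^ 2 :=
    mul_nonneg (by linarith) hw2.le
  rw [← neg_sub, inner_neg_left]
  exact ⟨by linarith, by nlinarith⟩

theorem descent_core_inequality (N : ℕ)
    (H : EuclideanSpace ℝ (Fin N) → EuclideanSpace ℝ (Fin N))
    (H' : EuclideanSpace ℝ (Fin N) → EuclideanSpace ℝ (Fin N) →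
      EuclideanSpace ℝ (Fin N))
    (S : EuclideanSpace ℝ (Fin N) →L[ℝ] EuclideanSpace ℝ (Fin N))
    (u utilde w : EuclideanSpace ℝ (Fin N))
    (hw : w = utilde - u) (hw0 : w ≠ 0)
    (hint : IntervalIntegrable (fun t : ℝ => H' (u + t • w) w)
      MeasureTheory.volume 0 1)
    (hmvt : H utilde - H u = ∫ t in (0:ℝ)..1, H' (u + t • w) w)
    (c : ℝ) (hc : 0 < c)
    (hpd : c * ‖w‖ ^ 2 ≤ ⟪S w, w⟫)
    (ε : ℝ) (hε : ε < c / 2)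
    (herr : ‖∫ t in (0:ℝ)..1, (H' (u + t • w) w - S w)‖ ≤ ε * ‖w‖) :
    ⟪H u - H utilde, w⟫ ≤ -(c / 2) * ‖w‖ ^ 2 ∧ -(c / 2) * ‖w‖ ^ 2 < 0 :=
  descent_core_inequality_general N H H' S u utilde w hw0 hint hmvt c hc hpd ε hε herr
end
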